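/- Let B₁ and B₂ be simple skew left braces and α : (B₂,∘) → Aut(B₁,+,∘) a non-trivial group homomorphism such that α is not injective and the group (B₁,∘) has trivial center. Suppose moreover that B₁ is not a trivial skew left brace. Then the semidirect product B₁ ⋊_α B₂ is strongly prime and is not simple. -/

import Mathlib

/-- A *skew left brace* is a set with two group structures `(B,+)` and `(B,∘)`
(the latter written multiplicatively) satisfying `a∘(b+c) = a∘b - a + a∘c`.
The two identity elements automatically coincide. -/
class SkewLeftBrace (B : Type*) extends AddGroup B, Group B where
  mul_add_eq : ∀ a b c : B, a * (b + c) = a * b - a + a * c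

namespace SkewLeftBrace

variable {B : Type*} [SkewLeftBrace B]

/-- The map `λ_a : b ↦ -a + a∘b`. -/
def lmap (a b : B) : B := -a + a * b

/-- The brace star operation `a*b := -a + a∘b - b`. -/
def bstar (a b : B) : B := -a + a * b - b

/-- `X*Y`: the additive subgroup generated by all `bstar x y`, `x ∈ X`, `y ∈ Y`,
regarded as a set. -/
def setStar (X Y : Set B) : Set B :=
  ↑(AddSubgroup.closure {z : B | ∃ x ∈ X, ∃ y ∈ Y, z = bstar x y})

/-- Pointwise sum of two subsets. -/
def setSum (X Y : Set B) : Set B := {w : B | ∃ x ∈ X, ∃ y ∈ Y, w = x + y}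

/-- `X^Z := {z + x - z : x ∈ X, z ∈ Z}`. -/
def setConj (X Z : Set B) : Set B := {w : B | ∃ x ∈ X, ∃ z ∈ Z, w = z + x + -z}

/-- An ideal of a skew left brace: a subgroup of `(B,+)` which is normal in both
`(B,+)` and `(B,∘)` and invariant under all the maps `λ_a`. -/
structure IsIdeal (I : Set B) : Prop where
  zero_mem : (0 : B) ∈ I
  add_mem : ∀ ⦃x y : B⦄, x ∈ I → y ∈ I → x + y ∈ I
  neg_mem : ∀ ⦃x : B⦄, x ∈ I → -x ∈ I
  add_conj_mem : ∀ (b : B) ⦃x : B⦄, x ∈ I → b + x + -b ∈ I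
  mul_mem : ∀ ⦃x y : B⦄, x ∈ I → y ∈ I → x * y ∈ I
  inv_mem : ∀ ⦃x : B⦄, x ∈ I → x⁻¹ ∈ I
  mul_conj_mem : ∀ (b : B) ⦃x : B⦄, x ∈ I → b * x * b⁻¹ ∈ I
  lmap_mem : ∀ (a : B) ⦃x : B⦄, x ∈ I → lmap a x ∈ I

/-- A minimal ideal: a nonzero ideal whose only sub-ideals are `{0}` and itself. -/
def IsMinimalIdeal (I : Set B) : Prop :=
  IsIdeal I ∧ I ≠ {0} ∧ ∀ J : Set B, IsIdeal J → J ⊆ I → J = {0} ∨ J = I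

theorem mul_zero' (a : B) : a * (0 : B) = a := by
  have h := SkewLeftBrace.mul_add_eq a (0 : B) (0 : B)
  rw [add_zero] at h
  have h2 : a * (0:B) - a = 0 := (right_eq_add.mp h)
  exact sub_eq_zero.mp h2

theorem zero_eq_one : (0 : B) = 1 := by
  have h := mul_zero' (1 : B)
  rw [one_mul] at h
  exact h

theorem IsIdeal.one_mem {I : Set B} (h : IsIdeal I) : (1 : B) ∈ I :=
  (zero_eq_one (B := B)) ▸ h.zero_mem

variable (B) in
/-- A skew left brace is *semiprime* if `I*I ≠ {0}` for every nonzero ideal `I`. -/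
def Semiprime : Prop := ∀ I : Set B, IsIdeal I → I ≠ {0} → setStar I I ≠ {0}

variable (B) in
/-- A skew left brace is *prime*... (and) *simple* if its only ideals are `{0}` and `B`,
and these are distinct. -/
def Simple : Prop :=
  ({0} : Set B) ≠ Set.univ ∧ ∀ I : Set B, IsIdeal I → I = {0} ∨ I = Set.univ

variable (B) in
/-- A skew left brace is *Artinian* if every descending chain of ideals stabilizes. -/
def Artinian : Prop :=
  ∀ f : ℕ → Set B, (∀ n, IsIdeal (f n)) → (∀ n, f (n + 1) ⊆ f n) →
    ∃ N, ∀ n, N ≤ n → f n = f N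

/-- The `*`-products of copies of a fixed set `I`. -/
inductive IsStarPowerOf (I : Set B) : Set B → Prop
  | base : IsStarPowerOf I I
  | star {X Y : Set B} : IsStarPowerOf I X → IsStarPowerOf I Y →
      IsStarPowerOf I (setStar X Y)

variable (B) in
/-- A skew left brace is *strongly semiprime* if for every nonzero ideal `I`, every
`*`-product of copies of `I` is nonzero. -/
def StronglySemiprime : Prop :=
  ∀ I : Set B, IsIdeal I → I ≠ {0} → ∀ X : Set B, IsStarPowerOf I X → X ≠ {0}

/-- The `*`-products of nonzero ideals. -/
inductive IsStarProdOfNonzeroIdeals : Set B → Prop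
  | ideal {I : Set B} : IsIdeal I → I ≠ {0} → IsStarProdOfNonzeroIdeals I
  | star {X Y : Set B} : IsStarProdOfNonzeroIdeals X → IsStarProdOfNonzeroIdeals Y →
      IsStarProdOfNonzeroIdeals (setStar X Y)

variable (B) in
/-- A skew left brace is *strongly prime* if every `*`-product of nonzero ideals is nonzero. -/
def StronglyPrime : Prop :=
  ∀ X : Set B, IsStarProdOfNonzeroIdeals X → X ≠ {0}

end SkewLeftBrace
namespace SkewLeftBrace

variable {B : Type*} [SkewLeftBrace B]

/-- An ideal, regarded as a skew left brace with the restricted operations. -/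
def IsIdeal.brace {I : Set B} (h : IsIdeal I) : SkewLeftBrace I :=
  letI : Zero I := ⟨⟨0, h.zero_mem⟩⟩
  letI : Add I := ⟨fun x y => ⟨x.1 + y.1, h.add_mem x.2 y.2⟩⟩
  letI : Neg I := ⟨fun x => ⟨-x.1, h.neg_mem x.2⟩⟩
  letI : One I := ⟨⟨1, h.one_mem⟩⟩
  letI : Mul I := ⟨fun x y => ⟨x.1 * y.1, h.mul_mem x.2 y.2⟩⟩
  letI : Inv I := ⟨fun x => ⟨x.1⁻¹, h.inv_mem x.2⟩⟩
  { add := (· + ·)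
    zero := 0
    neg := (- ·)
    nsmul := nsmulRec
    zsmul := zsmulRec
    add_assoc := fun a b c => Subtype.ext (add_assoc a.1 b.1 c.1)
    zero_add := fun a => Subtype.ext (zero_add a.1)
    add_zero := fun a => Subtype.ext (add_zero a.1)
    neg_add_cancel := fun a => Subtype.ext (neg_add_cancel a.1)
    mul := (· * ·)
    one := 1
    inv := (·⁻¹)
    npow := npowRec
    zpow := zpowRec
    mul_assoc := fun a b c => Subtype.ext (mul_assoc a.1 b.1 c.1)
    one_mul := fun a => Subtype.ext (one_mul a.1)
    mul_one := fun a => Subtype.ext (mul_one a.1)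
    inv_mul_cancel := fun a => Subtype.ext (inv_mul_cancel a.1)
    mul_add_eq := fun a b c =>
      Subtype.ext (by
        show a.1 * (b.1 + c.1) = a.1 * b.1 + -a.1 + a.1 * c.1
        rw [SkewLeftBrace.mul_add_eq, sub_eq_add_neg]) }

/-- The direct product of two skew left braces, with componentwise operations. -/
def prodBrace (B₁ B₂ : Type*) [SkewLeftBrace B₁] [SkewLeftBrace B₂] :
    SkewLeftBrace (B₁ × B₂) :=
  { (inferInstance : AddGroup (B₁ × B₂)), (inferInstance : Group (B₁ × B₂)) with
    mul_add_eq := fun a b c =>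
      Prod.ext (by simp [SkewLeftBrace.mul_add_eq]) (by simp [SkewLeftBrace.mul_add_eq]) }

/-- Two skew left braces are isomorphic if there is a bijection preserving `+` and `∘`. -/
def IsBraceIsomorphic (A C : Type*) [SkewLeftBrace A] [SkewLeftBrace C] : Prop :=
  ∃ f : A ≃ C, (∀ x y : A, f (x + y) = f x + f y) ∧ (∀ x y : A, f (x * y) = f x * f y)

/-- A group homomorphism from `(B₂,∘)` to the automorphism group `Aut(B₁,+,∘)` of the
skew left brace `B₁`, presented as an action `act : B₂ → B₁ → B₁` by skew left brace
automorphisms. -/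
structure BraceActionHom (B₂ B₁ : Type*) [SkewLeftBrace B₂] [SkewLeftBrace B₁] where
  act : B₂ → B₁ → B₁
  act_bijective : ∀ a : B₂, Function.Bijective (act a)
  act_add : ∀ (a : B₂) (x y : B₁), act a (x + y) = act a x + act a y
  act_mul : ∀ (a : B₂) (x y : B₁), act a (x * y) = act a x * act a y
  act_hom : ∀ (a b : B₂) (x : B₁), act (a * b) x = act a (act b x)
  act_one : ∀ x : B₁, act (1 : B₂) x = x

variable {B₁ B₂ : Type*} [SkewLeftBrace B₁] [SkewLeftBrace B₂]

theorem BraceActionHom.act_one' (α : BraceActionHom B₂ B₁) (a : B₂) :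
    α.act a (1 : B₁) = 1 := by
  have h := α.act_mul a 1 1
  rw [mul_one] at h
  exact mul_eq_left.mp h.symm

/-- The underlying type of the semidirect product of two skew left braces. -/
@[ext]
structure SDP (B₁ B₂ : Type*) where
  fst : B₁
  snd : B₂

/-- The semidirect product `B₁ ⋊_α B₂` of skew left braces: the additive group is the
direct product, while `(a₁,a₂) ∘ (b₁,b₂) = (a₁ ∘ α_{a₂}(b₁), a₂ ∘ b₂)`. -/
def BraceActionHom.sdp (α : BraceActionHom B₂ B₁) : SkewLeftBrace (SDP B₁ B₂) :=
  letI : Zero (SDP B₁ B₂) := ⟨⟨0, 0⟩⟩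
  letI : Add (SDP B₁ B₂) := ⟨fun p q => ⟨p.fst + q.fst, p.snd + q.snd⟩⟩
  letI : Neg (SDP B₁ B₂) := ⟨fun p => ⟨-p.fst, -p.snd⟩⟩
  letI : One (SDP B₁ B₂) := ⟨⟨1, 1⟩⟩
  letI : Mul (SDP B₁ B₂) := ⟨fun p q => ⟨p.fst * α.act p.snd q.fst, p.snd * q.snd⟩⟩
  letI : Inv (SDP B₁ B₂) := ⟨fun p => ⟨α.act p.snd⁻¹ p.fst⁻¹, p.snd⁻¹⟩⟩
  { add := (· + ·)
    zero := 0
    neg := (- ·)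
    nsmul := nsmulRec
    zsmul := zsmulRec
    add_assoc := fun a b c =>
      SDP.ext (add_assoc a.fst b.fst c.fst) (add_assoc a.snd b.snd c.snd)
    zero_add := fun a => SDP.ext (zero_add a.fst) (zero_add a.snd)
    add_zero := fun a => SDP.ext (add_zero a.fst) (add_zero a.snd)
    neg_add_cancel := fun a => SDP.ext (neg_add_cancel a.fst) (neg_add_cancel a.snd)
    mul := (· * ·)
    one := 1
    inv := (·⁻¹)
    npow := npowRec
    zpow := zpowRec
    mul_assoc := fun a b c =>
      SDP.ext
        (by show (a.fst * α.act a.snd b.fst) * α.act (a.snd * b.snd) c.fst =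
              a.fst * α.act a.snd (b.fst * α.act b.snd c.fst)
            rw [α.act_hom, α.act_mul, mul_assoc])
        (mul_assoc a.snd b.snd c.snd)
    one_mul := fun a =>
      SDP.ext (by show (1 : B₁) * α.act 1 a.fst = a.fst; rw [α.act_one, one_mul])
        (one_mul a.snd)
    mul_one := fun a =>
      SDP.ext (by show a.fst * α.act a.snd (1 : B₁) = a.fst; rw [α.act_one', mul_one])
        (mul_one a.snd)
    inv_mul_cancel := fun a =>
      SDP.ext
        (by show α.act a.snd⁻¹ a.fst⁻¹ * α.act a.snd⁻¹ a.fst = 1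
            rw [← α.act_mul, inv_mul_cancel, α.act_one'])
        (inv_mul_cancel a.snd)
    mul_add_eq := fun a b c =>
      SDP.ext
        (by show a.fst * α.act a.snd (b.fst + c.fst) =
              a.fst * α.act a.snd b.fst + -a.fst + a.fst * α.act a.snd c.fst
            rw [α.act_add, SkewLeftBrace.mul_add_eq, sub_eq_add_neg])
        (by show a.snd * (b.snd + c.snd) = a.snd * b.snd + -a.snd + a.snd * c.snd
            rw [SkewLeftBrace.mul_add_eq, sub_eq_add_neg]) }

end SkewLeftBrace

/-!
The copy `B₁ × {0}` of `B₁` is a nonzero proper ideal of `B₁ ⋊_α B₂` contained in every nonzero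
ideal `J`. Otherwise `J` meets it trivially, so the two commute in `(B,∘)`, which forces `α_a` to be
conjugation by `x⁻¹` whenever `(x, a) ∈ J`. By simplicity of `B₂`, `J` projects onto `B₂`; since
`(B₁,∘)` has trivial center, `J` then contains `{0} × ker α`, hence all of `{0} × B₂`, and `α`
would be trivial. As `B₁` is simple and not trivial, `B₁ * B₁ = B₁`, so `B₁ × {0}` lies in its own
`*`-square and therefore in every `*`-product of nonzero ideals.
-/

namespace SkewLeftBrace

section Hom

variable {A C : Type*} [SkewLeftBrace A] [SkewLeftBrace C]

structure IsBraceHom (f : A → C) : Prop where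
  map_add : ∀ x y, f (x + y) = f x + f y
  map_mul : ∀ x y, f (x * y) = f x * f y

namespace IsBraceHom

variable {f : A → C}

theorem map_zero (hf : IsBraceHom f) : f 0 = 0 :=
  (AddMonoidHom.mk' f hf.map_add).map_zero

theorem map_neg (hf : IsBraceHom f) (x : A) : f (-x) = -f x :=
  (AddMonoidHom.mk' f hf.map_add).map_neg x

theorem map_inv (hf : IsBraceHom f) (x : A) : f x⁻¹ = (f x)⁻¹ :=
  (MonoidHom.mk' f hf.map_mul).map_inv x

theorem map_lmap (hf : IsBraceHom f) (a x : A) : f (lmap a x) = lmap (f a) (f x) := by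
  simp only [lmap, hf.map_add, hf.map_neg, hf.map_mul]

theorem map_bstar (hf : IsBraceHom f) (a b : A) : f (bstar a b) = bstar (f a) (f b) := by
  simp only [bstar, sub_eq_add_neg, hf.map_add, hf.map_neg, hf.map_mul]

theorem image_setStar_subset (hf : IsBraceHom f) (X Y : Set A) :
    f '' setStar X Y ⊆ setStar (f '' X) (f '' Y) := by
  rintro _ ⟨z, hz, rfl⟩
  refine (AddSubgroup.closure_le
    (K := (AddSubgroup.closure _).comap (AddMonoidHom.mk' f hf.map_add))).mpr ?_ hz
  rintro _ ⟨x, hx, y, hy, rfl⟩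
  exact AddSubgroup.subset_closure ⟨f x, ⟨x, hx, rfl⟩, f y, ⟨y, hy, rfl⟩, hf.map_bstar x y⟩

end IsBraceHom

theorem IsIdeal.preimage {f : A → C} (hf : IsBraceHom f) {J : Set C} (hJ : IsIdeal J) :
    IsIdeal (f ⁻¹' J) where
  zero_mem := by simpa only [Set.mem_preimage, hf.map_zero] using hJ.zero_mem
  add_mem x y hx hy := by
    simpa only [Set.mem_preimage, hf.map_add] using hJ.add_mem hx hy
  neg_mem x hx := by simpa only [Set.mem_preimage, hf.map_neg] using hJ.neg_mem hx
  add_conj_mem b x hx := by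
    simpa only [Set.mem_preimage, hf.map_add, hf.map_neg] using hJ.add_conj_mem (f b) hx
  mul_mem x y hx hy := by
    simpa only [Set.mem_preimage, hf.map_mul] using hJ.mul_mem hx hy
  inv_mem x hx := by simpa only [Set.mem_preimage, hf.map_inv] using hJ.inv_mem hx
  mul_conj_mem b x hx := by
    simpa only [Set.mem_preimage, hf.map_mul, hf.map_inv] using hJ.mul_conj_mem (f b) hx
  lmap_mem a x hx := by
    simpa only [Set.mem_preimage, hf.map_lmap] using hJ.lmap_mem (f a) hx

theorem IsIdeal.image {f : A → C} (hf : IsBraceHom f) (hsurj : Function.Surjective f)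
    {I : Set A} (hI : IsIdeal I) : IsIdeal (f '' I) where
  zero_mem := ⟨0, hI.zero_mem, hf.map_zero⟩
  add_mem := by
    rintro _ _ ⟨x, hx, rfl⟩ ⟨y, hy, rfl⟩
    exact ⟨x + y, hI.add_mem hx hy, hf.map_add x y⟩
  neg_mem := by
    rintro _ ⟨x, hx, rfl⟩
    exact ⟨-x, hI.neg_mem hx, hf.map_neg x⟩
  add_conj_mem b := by
    rintro _ ⟨x, hx, rfl⟩
    obtain ⟨c, rfl⟩ := hsurj b
    exact ⟨c + x + -c, hI.add_conj_mem c hx, by simp only [hf.map_add, hf.map_neg]⟩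
  mul_mem := by
    rintro _ _ ⟨x, hx, rfl⟩ ⟨y, hy, rfl⟩
    exact ⟨x * y, hI.mul_mem hx hy, hf.map_mul x y⟩
  inv_mem := by
    rintro _ ⟨x, hx, rfl⟩
    exact ⟨x⁻¹, hI.inv_mem hx, hf.map_inv x⟩
  mul_conj_mem b := by
    rintro _ ⟨x, hx, rfl⟩
    obtain ⟨c, rfl⟩ := hsurj b
    exact ⟨c * x * c⁻¹, hI.mul_conj_mem c hx, by simp only [hf.map_mul, hf.map_inv]⟩
  lmap_mem a := by
    rintro _ ⟨x, hx, rfl⟩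
    obtain ⟨c, rfl⟩ := hsurj a
    exact ⟨lmap c x, hI.lmap_mem c hx, hf.map_lmap c x⟩

end Hom

variable {B : Type*} [SkewLeftBrace B]

theorem isIdeal_zero : IsIdeal ({0} : Set B) where
  zero_mem := rfl
  add_mem x y hx hy := by simp_all
  neg_mem x hx := by simp_all
  add_conj_mem b x hx := by simp_all
  mul_mem x y hx hy := by simp_all [zero_eq_one]
  inv_mem x hx := by simp_all [zero_eq_one]
  mul_conj_mem b x hx := by simp_all [zero_eq_one]
  lmap_mem a x hx := by simp_all [lmap, mul_zero']

theorem Simple.exists_ne_zero (hs : Simple B) : ∃ x : B, x ≠ 0 := by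
  by_contra! h
  exact hs.1 (Set.eq_univ_of_forall h)

def IsIdeal.mulSubgroup {I : Set B} (hI : IsIdeal I) : Subgroup B where
  carrier := I
  mul_mem' := fun hx hy => hI.mul_mem hx hy
  one_mem' := hI.one_mem
  inv_mem' := fun hx => hI.inv_mem hx

theorem IsIdeal.commute_of_inter_subset_zero {I J : Set B} (hI : IsIdeal I) (hJ : IsIdeal J)
    (hIJ : I ∩ J ⊆ {0}) {x y : B} (hx : x ∈ I) (hy : y ∈ J) : x * y = y * x :=
  Subgroup.commute_of_normal_of_disjoint hI.mulSubgroup hJ.mulSubgroup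
    ⟨fun _ hz b => hI.mul_conj_mem b hz⟩ ⟨fun _ hz b => hJ.mul_conj_mem b hz⟩
    (Subgroup.disjoint_def.mpr fun hz hz' => (zero_eq_one (B := B)) ▸ hIJ ⟨hz, hz'⟩) x y hx hy

theorem mul_eq_add_bstar_add (a b : B) : a * b = a + bstar a b + b := by
  simp [bstar, sub_eq_add_neg, add_assoc]

theorem inv_eq_neg_bstar_sub (b : B) : b⁻¹ = -bstar b b⁻¹ - b := by
  have h := mul_eq_add_bstar_add b b⁻¹
  rw [mul_inv_cancel, ← zero_eq_one, add_assoc, eq_comm, add_eq_zero_iff_neg_eq] at h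
  rw [sub_eq_add_neg]
  exact eq_neg_add_of_add_eq h.symm

theorem add_bstar_add_neg (a b c : B) : b + bstar a c + -b = -bstar a b + bstar a (b + c) := by
  simp [bstar, sub_eq_add_neg, SkewLeftBrace.mul_add_eq, neg_add_rev, add_assoc]

theorem lmap_eq_bstar_add (a x : B) : lmap a x = bstar a x + x := by
  simp [lmap, bstar, sub_eq_add_neg, add_assoc]

theorem setStar_mono {X X' Y Y' : Set B} (hX : X ⊆ X') (hY : Y ⊆ Y') :
    setStar X Y ⊆ setStar X' Y' :=
  AddSubgroup.closure_mono fun _ ⟨x, hx, y, hy, hz⟩ => ⟨x, hX hx, y, hY hy, hz⟩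

theorem isIdeal_setStar_univ : IsIdeal (setStar (Set.univ : Set B) Set.univ) := by
  set S := AddSubgroup.closure {z : B | ∃ x ∈ Set.univ, ∃ y ∈ Set.univ, z = bstar x y}
  have hS : setStar (Set.univ : Set B) Set.univ = S := rfl
  have bstar_mem (a b : B) : bstar a b ∈ S := AddSubgroup.subset_closure ⟨a, trivial, b, trivial, rfl⟩
  have add_conj_mem (b : B) {x : B} (hx : x ∈ S) : b + x + -b ∈ S := by
    let conj : B →+ B := AddMonoidHom.mk' (fun x => b + x + -b) fun x y => by
      simp [add_assoc]
    refine (AddSubgroup.closure_le (K := S.comap conj)).mpr ?_ hx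
    rintro _ ⟨u, -, v, -, rfl⟩
    show b + bstar u v + -b ∈ S
    rw [add_bstar_add_neg]
    exact S.add_mem (S.neg_mem (bstar_mem u b)) (bstar_mem u (b + v))
  rw [hS]
  refine ⟨S.zero_mem, fun _ _ => S.add_mem, fun _ => S.neg_mem,
    fun b _ => add_conj_mem b, ?_, ?_, ?_, ?_⟩
  · intro x y hx hy
    rw [mul_eq_add_bstar_add]
    exact S.add_mem (S.add_mem hx (bstar_mem x y)) hy
  · intro x hx
    rw [inv_eq_neg_bstar_sub]
    exact S.sub_mem (S.neg_mem (bstar_mem x x⁻¹)) hx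
  · intro b x hx
    have key : b * x * b⁻¹ =
        b + (bstar b x + x + (bstar (b * x) b⁻¹ - bstar b b⁻¹)) + -b :=
      calc b * x * b⁻¹ = b * x + bstar (b * x) b⁻¹ + b⁻¹ := mul_eq_add_bstar_add _ _
        _ = b + bstar b x + x + bstar (b * x) b⁻¹ + (-bstar b b⁻¹ - b) := by
          rw [← mul_eq_add_bstar_add b x, ← inv_eq_neg_bstar_sub]
        _ = b + (bstar b x + x + (bstar (b * x) b⁻¹ - bstar b b⁻¹)) + -b := by
          simp only [sub_eq_add_neg, add_assoc]
    rw [key]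
    exact add_conj_mem b (S.add_mem (S.add_mem (bstar_mem b x) hx)
      (S.sub_mem (bstar_mem (b * x) b⁻¹) (bstar_mem b b⁻¹)))
  · intro a x hx
    rw [lmap_eq_bstar_add]
    exact S.add_mem (bstar_mem a x) hx

theorem setStar_univ_eq_univ (hs : Simple B) (hnt : ∃ a b : B, a * b ≠ a + b) :
    setStar (Set.univ : Set B) Set.univ = Set.univ := by
  refine (hs.2 _ isIdeal_setStar_univ).resolve_left fun h => ?_
  obtain ⟨a, b, hab⟩ := hnt
  have hm : bstar a b ∈ setStar (Set.univ : Set B) Set.univ :=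
    AddSubgroup.subset_closure ⟨a, trivial, b, trivial, rfl⟩
  rw [h, Set.mem_singleton_iff, bstar, sub_eq_zero, neg_add_eq_iff_eq_add] at hm
  exact hab hm

theorem IsStarProdOfNonzeroIdeals.superset {I X : Set B} (hX : IsStarProdOfNonzeroIdeals X)
    (hideal : ∀ J, IsIdeal J → J ≠ {0} → I ⊆ J) (hstar : I ⊆ setStar I I) : I ⊆ X := by
  induction hX with
  | ideal hJ hJ0 => exact hideal _ hJ hJ0
  | star _ _ ihX ihY => exact hstar.trans (setStar_mono ihX ihY)

theorem stronglyPrime_of_forall_subset {I : Set B} (hI : ∃ x ∈ I, x ≠ 0)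
    (hideal : ∀ J, IsIdeal J → J ≠ {0} → I ⊆ J) (hstar : I ⊆ setStar I I) :
    StronglyPrime B := by
  intro X hX hX0
  obtain ⟨x, hx, hx0⟩ := hI
  have hx' := hX.superset hideal hstar hx
  rw [hX0] at hx'
  exact hx0 hx'

theorem not_simple_of_isIdeal {I : Set B} (hI : IsIdeal I) (hI0 : ∃ x ∈ I, x ≠ 0)
    (hIuniv : I ≠ Set.univ) : ¬ Simple B := by
  rintro ⟨-, hs⟩
  obtain ⟨x, hx, hx0⟩ := hI0
  rcases hs I hI with h | h
  · rw [h] at hx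
    exact hx0 hx
  · exact hIuniv h

end SkewLeftBrace

namespace SkewLeftBrace.BraceActionHom

variable {B₁ B₂ : Type*} [SkewLeftBrace B₁] [SkewLeftBrace B₂]

theorem act_zero (α : BraceActionHom B₂ B₁) (x : B₁) : α.act 0 x = x := by
  rw [zero_eq_one, α.act_one]

theorem act_apply_zero (α : BraceActionHom B₂ B₁) (a : B₂) : α.act a 0 = 0 := by
  rw [zero_eq_one, α.act_one']

theorem exists_ne_zero_act_eq_self (α : BraceActionHom B₂ B₁)
    (hninj : ¬ ∀ a b : B₂, (∀ x : B₁, α.act a x = α.act b x) → a = b) :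
    ∃ a : B₂, a ≠ 0 ∧ ∀ x, α.act a x = x := by
  push Not at hninj
  obtain ⟨a, b, hab, hne⟩ := hninj
  refine ⟨a * b⁻¹, fun h => hne (mul_inv_eq_one.mp (zero_eq_one (B := B₂) ▸ h)), fun x => ?_⟩
  rw [α.act_hom, hab, ← α.act_hom, mul_inv_cancel, α.act_one]

/-- A copy of `SDP B₁ B₂` indexed by `α`, so that `α.sdp` can be an instance. -/
def SemidirectProduct (_ : BraceActionHom B₂ B₁) : Type _ := SDP B₁ B₂

instance (α : BraceActionHom B₂ B₁) : SkewLeftBrace α.SemidirectProduct := α.sdp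

variable {α : BraceActionHom B₂ B₁}

def inl (α : BraceActionHom B₂ B₁) (x : B₁) : α.SemidirectProduct := (⟨x, 0⟩ : SDP B₁ B₂)

def inr (α : BraceActionHom B₂ B₁) (a : B₂) : α.SemidirectProduct := (⟨0, a⟩ : SDP B₁ B₂)

def snd (α : BraceActionHom B₂ B₁) (p : α.SemidirectProduct) : B₂ := SDP.snd p

theorem isBraceHom_inl : IsBraceHom α.inl where
  map_add x y := SDP.ext rfl (add_zero 0).symm
  map_mul x y := SDP.ext (by show x * y = x * α.act 0 y; rw [act_zero])
    (by show (0 : B₂) = 0 * 0; rw [zero_eq_one, one_mul])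

theorem isBraceHom_inr : IsBraceHom α.inr where
  map_add a b := SDP.ext (add_zero 0).symm rfl
  map_mul a b := SDP.ext
    (by show (0 : B₁) = 0 * α.act a 0; rw [act_apply_zero, zero_eq_one, one_mul]) rfl

theorem isBraceHom_snd : IsBraceHom α.snd where
  map_add _ _ := rfl
  map_mul _ _ := rfl

theorem range_inl : Set.range α.inl = α.snd ⁻¹' {0} := by
  ext p
  exact ⟨fun ⟨x, hx⟩ => hx ▸ rfl, fun hp => ⟨p.fst, SDP.ext rfl hp.symm⟩⟩

theorem isIdeal_range_inl : IsIdeal (Set.range α.inl) := by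
  rw [range_inl]
  exact isIdeal_zero.preimage isBraceHom_snd

theorem range_inl_subset_setStar (h₁ : Simple B₁) (hnontriv : ∃ a b : B₁, a * b ≠ a + b) :
    Set.range α.inl ⊆ setStar (Set.range α.inl) (Set.range α.inl) := by
  have h := isBraceHom_inl.image_setStar_subset (f := α.inl) Set.univ Set.univ
  rwa [setStar_univ_eq_univ h₁ hnontriv, Set.image_univ] at h

theorem act_eq_conj_of_mem {J : Set α.SemidirectProduct} (hJ : IsIdeal J)
    (hJ₁ : ∀ x, α.inl x ∈ J → x = 0) {p : α.SemidirectProduct} (hp : p ∈ J) (y : B₁) :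
    p.fst * α.act p.snd y = y * p.fst := by
  have h := isIdeal_range_inl.commute_of_inter_subset_zero hJ
    (fun _ ⟨⟨x, hx⟩, hxJ⟩ => by subst hx; rw [hJ₁ x hxJ]; rfl) (Set.mem_range_self y) hp
  have h' := congrArg SDP.fst h
  change y * α.act 0 p.fst = p.fst * α.act p.snd y at h'
  rw [act_zero] at h'
  exact h'.symm

section NonzeroIdeal

variable {J : Set α.SemidirectProduct}

theorem snd_image_eq_univ (h₂ : Simple B₂) (hJ : IsIdeal J) (hJ0 : J ≠ {0})
    (hJ₁ : ∀ x, α.inl x ∈ J → x = 0) : α.snd '' J = Set.univ := by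
  refine (h₂.2 _ (hJ.image isBraceHom_snd fun a => ⟨α.inr a, rfl⟩)).resolve_left fun h => hJ0 ?_
  refine Set.Subset.antisymm (fun p hp => ?_) (Set.singleton_subset_iff.mpr hJ.zero_mem)
  have hsnd : p.snd ∈ ({0} : Set B₂) := h ▸ Set.mem_image_of_mem _ hp
  have hp' : p = α.inl p.fst := SDP.ext rfl hsnd
  rw [hp'] at hp ⊢
  rw [hJ₁ _ hp, isBraceHom_inl.map_zero]
  rfl

theorem inr_mem_of_act_eq_self (hcenter : ∀ g : B₁, (∀ h : B₁, g * h = h * g) → g = 1)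
    (hJ : IsIdeal J) (hJ₁ : ∀ x, α.inl x ∈ J → x = 0)
    (hsnd : α.snd '' J = Set.univ)
    {a : B₂} (ha : ∀ y, α.act a y = y) : α.inr a ∈ J := by
  obtain ⟨p, hp, hpa⟩ : a ∈ α.snd '' J := hsnd ▸ Set.mem_univ a
  have hfst : p.fst = 1 := hcenter _ fun y => by
    have h := act_eq_conj_of_mem hJ hJ₁ hp y
    rwa [show p.snd = a from hpa, ha] at h
  have hp' : α.inr a = p := SDP.ext (zero_eq_one.trans hfst.symm) hpa.symm
  rwa [hp']

theorem act_eq_self_of_inr_mem (hJ : IsIdeal J) (hJ₁ : ∀ x, α.inl x ∈ J → x = 0) {a : B₂}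
    (ha : α.inr a ∈ J) (y : B₁) : α.act a y = y := by
  have h := act_eq_conj_of_mem hJ hJ₁ ha y
  change 0 * α.act a y = y * 0 at h
  rwa [zero_eq_one, one_mul, mul_one] at h

theorem inl_preimage_ne_zero (h₂ : Simple B₂) (hα : ∃ (a : B₂) (x : B₁), α.act a x ≠ x)
    (hninj : ¬ ∀ a b : B₂, (∀ x : B₁, α.act a x = α.act b x) → a = b)
    (hcenter : ∀ g : B₁, (∀ h : B₁, g * h = h * g) → g = 1)
    (hJ : IsIdeal J) (hJ0 : J ≠ {0}) : α.inl ⁻¹' J ≠ {0} := by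
  intro hJ₁
  replace hJ₁ : ∀ x, α.inl x ∈ J → x = 0 := fun x hx => (hJ₁ ▸ hx : x ∈ ({0} : Set B₁))
  have hsnd := snd_image_eq_univ h₂ hJ hJ0 hJ₁
  have hJ₂ : α.inr ⁻¹' J = Set.univ := by
    obtain ⟨a, ha0, ha⟩ := α.exists_ne_zero_act_eq_self hninj
    refine (h₂.2 _ (hJ.preimage isBraceHom_inr)).resolve_left fun h => ha0 ?_
    have haJ : a ∈ α.inr ⁻¹' J := inr_mem_of_act_eq_self hcenter hJ hJ₁ hsnd ha
    rwa [h] at haJ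
  obtain ⟨a, x, hax⟩ := hα
  exact hax (act_eq_self_of_inr_mem hJ hJ₁ (hJ₂ ▸ Set.mem_univ a : a ∈ α.inr ⁻¹' J) x)

theorem range_inl_subset_of_isIdeal (h₁ : Simple B₁) (h₂ : Simple B₂)
    (hα : ∃ (a : B₂) (x : B₁), α.act a x ≠ x)
    (hninj : ¬ ∀ a b : B₂, (∀ x : B₁, α.act a x = α.act b x) → a = b)
    (hcenter : ∀ g : B₁, (∀ h : B₁, g * h = h * g) → g = 1)
    (hJ : IsIdeal J) (hJ0 : J ≠ {0}) : Set.range α.inl ⊆ J := by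
  have hJ₁ := (h₁.2 _ (hJ.preimage isBraceHom_inl)).resolve_left
    (inl_preimage_ne_zero h₂ hα hninj hcenter hJ hJ0)
  rintro _ ⟨x, rfl⟩
  exact (hJ₁ ▸ Set.mem_univ x : x ∈ α.inl ⁻¹' J)

end NonzeroIdeal

end SkewLeftBrace.BraceActionHom

open SkewLeftBrace BraceActionHom

/-- If `B₁`, `B₂` are simple, `α` is non-trivial and non-injective, `(B₁,∘)` has
trivial center, and `B₁` is not a trivial skew left brace, then `B₁ ⋊_α B₂` is strongly
prime and not simple. -/
theorem sdp_stronglyPrime_of_noninjective {B₁ B₂ : Type*} [SkewLeftBrace B₁] [SkewLeftBrace B₂]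
    (h₁ : SkewLeftBrace.Simple B₁) (h₂ : SkewLeftBrace.Simple B₂)
    (α : BraceActionHom B₂ B₁)
    (hα : ∃ (a : B₂) (x : B₁), α.act a x ≠ x)
    (hninj : ¬ ∀ a b : B₂, (∀ x : B₁, α.act a x = α.act b x) → a = b)
    (hcenter : ∀ g : B₁, (∀ h : B₁, g * h = h * g) → g = 1)
    (hnontriv : ∃ a b : B₁, a * b ≠ a + b) :
    @SkewLeftBrace.StronglyPrime _ α.sdp ∧ ¬ @SkewLeftBrace.Simple _ α.sdp := by
  obtain ⟨x₀, hx₀⟩ := h₁.exists_ne_zero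
  obtain ⟨y₀, hy₀⟩ := h₂.exists_ne_zero
  have hI0 : ∃ p ∈ Set.range α.inl, p ≠ 0 :=
    ⟨α.inl x₀, Set.mem_range_self x₀, fun h => hx₀ (congrArg SDP.fst h)⟩
  have hIuniv : Set.range α.inl ≠ Set.univ := fun h => by
    obtain ⟨x, hx⟩ : α.inr y₀ ∈ Set.range α.inl := h ▸ Set.mem_univ _
    exact hy₀ (congrArg SDP.snd hx).symm
  show StronglyPrime α.SemidirectProduct ∧ ¬ Simple α.SemidirectProduct
  exact ⟨stronglyPrime_of_forall_subset hI0
      (fun _ hJ hJ0 => range_inl_subset_of_isIdeal h₁ h₂ hα hninj hcenter hJ hJ0)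
      (range_inl_subset_setStar h₁ hnontriv),
    not_simple_of_isIdeal isIdeal_range_inl hI0 hIuniv⟩
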